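/- arXiv:1903.10390 — 8 statements merged into one kernel-verified Lean document; each statement's English description precedes it below -/
import Mathlib

section
/- For the integral block ODE system, the difference of the output concentrations equals the scaled integral of the difference of the input concentrations: if x_{I+} and x_{I-} satisfy ∂t x_{I+} = r·x_{E+} − q·x_{I+}·x_{I−} and ∂t x_{I−} = r·x_{E−} − q·x_{I+}·x_{I−} with x_{I+}(0) = x_{I−}(0) = 0, then for all t ≥ 0, x_{I+}(t) − x_{I−}(t) = r·∫₀ᵗ (x_{E+}(τ) − x_{E−}(τ)) dτ. -/
/-! The annihilation reaction `I+ + I- → ∅` consumes both output species at the same rate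
`q x_{I+} x_{I-}`, so this term cancels from the derivative of `x_{I+} - x_{I-}`, which is therefore
`r (x_{E+} - x_{E-})`. Since both outputs start at `0`, the fundamental theorem of calculus gives
the claim. -/

open Set intervalIntegral

theorem HasDerivAt.sub_of_common_loss {𝕜 F : Type*} [NontriviallyNormedField 𝕜]
    [NormedAddCommGroup F] [NormedSpace 𝕜 F] {f g : 𝕜 → F} {a b c : F} {x : 𝕜}
    (hf : HasDerivAt f (a - c) x) (hg : HasDerivAt g (b - c) x) :
    HasDerivAt (fun y => f y - g y) (a - b) x :=
  (hf.sub hg).congr_deriv (sub_sub_sub_cancel_right a b c)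

theorem integral_block_correct_general
    (xEp xEm xIp xIm : ℝ → ℝ) (r q : ℝ)
    (hEp_cont : Continuous xEp) (hEm_cont : Continuous xEm)
    (hIp : ∀ t, 0 ≤ t → HasDerivAt xIp (r * xEp t - q * xIp t * xIm t) t)
    (hIm : ∀ t, 0 ≤ t → HasDerivAt xIm (r * xEm t - q * xIp t * xIm t) t)
    (hIp0 : xIp 0 = 0) (hIm0 : xIm 0 = 0) :
    ∀ t, 0 ≤ t → xIp t - xIm t = r * ∫ τ in (0:ℝ)..t, (xEp τ - xEm τ) := by
  intro t ht
  have hdiff : ∀ s ∈ uIcc 0 t,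
      HasDerivAt (fun u => xIp u - xIm u) (r * (xEp s - xEm s)) s := by
    intro s hs
    have hs0 : 0 ≤ s := (uIcc_of_le ht ▸ hs).1
    rw [mul_sub]
    exact (hIp s hs0).sub_of_common_loss (hIm s hs0)
  have hint : IntervalIntegrable (fun s => r * (xEp s - xEm s)) MeasureTheory.volume 0 t :=
    (continuous_const.mul (hEp_cont.sub hEm_cont)).intervalIntegrable 0 t
  have hftc := integral_eq_sub_of_hasDerivAt hdiff hint
  rw [integral_const_mul, hIp0, hIm0, sub_zero, sub_zero] at hftc
  exact hftc.symm

/-- Integral block correctness: the difference of the output concentrations equals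
the scaled integral of the difference of the input concentrations. -/
theorem integral_block_correct
    (xEp xEm xIp xIm : ℝ → ℝ) (r q : ℝ)
    (hr : 0 ≤ r) (hq : 0 < q)
    (hEp_cont : Continuous xEp) (hEm_cont : Continuous xEm)
    (hEp_nonneg : ∀ t, 0 ≤ t → 0 ≤ xEp t)
    (hEm_nonneg : ∀ t, 0 ≤ t → 0 ≤ xEm t)
    (hIp : ∀ t, 0 ≤ t → HasDerivAt xIp (r * xEp t - q * xIp t * xIm t) t)
    (hIm : ∀ t, 0 ≤ t → HasDerivAt xIm (r * xEm t - q * xIp t * xIm t) t)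
    (hIp0 : xIp 0 = 0) (hIm0 : xIm 0 = 0) :
    ∀ t, 0 ≤ t → xIp t - xIm t = r * ∫ τ in (0:ℝ)..t, (xEp τ - xEm τ) :=
  integral_block_correct_general xEp xEm xIp xIm r q hEp_cont hEm_cont hIp hIm hIp0 hIm0
end

section
/- In the derivative block ODE system, the quantity z = x_{D+} − x_{D−} satisfies the linear ODE ∂t z = s·(∂t x_{A+} − ∂t x_{A−}) − s·z, i.e., the annihilation terms cancel exactly in the difference of the two output species. -/
theorem derivative_block_difference_ode_general
    (xEp xEm xAp xAm xDp xDm : ℝ → ℝ) (r v s q : ℝ)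
    (hDp : ∀ t, HasDerivAt xDp
      (s * v * r * xEp t + v * s * xAm t - s * xDp t - q * xDp t * xDm t) t)
    (hDm : ∀ t, HasDerivAt xDm
      (s * v * r * xEm t + v * s * xAp t - s * xDm t - q * xDp t * xDm t) t) :
    ∀ t, HasDerivAt (fun u => xDp u - xDm u)
      (s * ((v * r * xEp t - v * xAp t) - (v * r * xEm t - v * xAm t))
        - s * (xDp t - xDm t)) t :=
  fun t => ((hDp t).fun_sub (hDm t)).congr_deriv (by ring)

/-- In the derivative block ODE system, z = x_{D+} - x_{D-} satisfies the linear ODE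
∂t z = s·(∂t x_{A+} - ∂t x_{A-}) - s·z : the annihilation terms cancel exactly. -/
theorem derivative_block_difference_ode
    (xEp xEm xAp xAm xDp xDm : ℝ → ℝ) (r v s q : ℝ)
    (hr : 0 ≤ r) (hv : 0 < v) (hs : 0 < s) (hq : 0 < q)
    (hEp_nonneg : ∀ t, 0 ≤ xEp t) (hEm_nonneg : ∀ t, 0 ≤ xEm t)
    (hDp : ∀ t, HasDerivAt xDp
      (s * v * r * xEp t + v * s * xAm t - s * xDp t - q * xDp t * xDm t) t)
    (hDm : ∀ t, HasDerivAt xDm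
      (s * v * r * xEm t + v * s * xAp t - s * xDm t - q * xDp t * xDm t) t)
    (hAp : ∀ t, HasDerivAt xAp (v * r * xEp t - v * xAp t) t)
    (hAm : ∀ t, HasDerivAt xAm (v * r * xEm t - v * xAm t) t) :
    ∀ t, HasDerivAt (fun u => xDp u - xDm u)
      (s * ((v * r * xEp t - v * xAp t) - (v * r * xEm t - v * xAm t))
        - s * (xDp t - xDm t)) t :=
  derivative_block_difference_ode_general xEp xEm xAp xAm xDp xDm r v s q hDp hDm
end

section
/- The fast subsystem of the proportional block has a unique nonnegative equilibrium: for constants r·s·e⁺ ≥ 0, r·s·e⁻ ≥ 0, s > 0, q > 0, the system of equations r·s·e⁺ − s·p⁺ − q·p⁺·p⁻ = 0 and r·s·e⁻ − s·p⁻ − q·p⁺·p⁻ = 0 has exactly one solution (p⁺, p⁻) with p⁺ ≥ 0 and p⁻ ≥ 0. -/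
/-!
Write `a = r s e⁺` and `b = r s e⁻`. Subtracting the two equations gives `s (p⁺ - p⁻) = a - b`, so
every equilibrium lies on the line `p⁻ = p⁺ - d` with `d = (a - b) / s`; on it the first equation is
the quadratic `q p² + (s - q d) p = a`, whose larger root is the equilibrium. The discriminant can
be written both as `(s - q d)² + 4 q a` and as `(s + q d)² + 4 q b`, which makes both coordinates
nonnegative. Uniqueness: for two equilibria the differences of the coordinates agree, and
subtracting the first equations yields `(p⁺ - p'⁺) (s + q (p⁺ + p'⁻)) = 0`.
-/

def IsNonnegEquilibrium (s q a b : ℝ) (p : ℝ × ℝ) : Prop :=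
  0 ≤ p.1 ∧ 0 ≤ p.2 ∧ a - s * p.1 - q * p.1 * p.2 = 0 ∧ b - s * p.2 - q * p.1 * p.2 = 0

namespace IsNonnegEquilibrium

variable {s q a b : ℝ}

theorem sub_eq {p : ℝ × ℝ} (hs : s ≠ 0) (hp : IsNonnegEquilibrium s q a b p) :
    p.1 - p.2 = (a - b) / s := by
  obtain ⟨-, -, h₁, h₂⟩ := hp
  rw [eq_div_iff hs]
  linear_combination h₂ - h₁

theorem eq {p p' : ℝ × ℝ} (hs : 0 < s) (hq : 0 < q) (hp : IsNonnegEquilibrium s q a b p)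
    (hp' : IsNonnegEquilibrium s q a b p') : p = p' := by
  have hdiff : p.1 - p.2 = p'.1 - p'.2 := by rw [hp.sub_eq hs.ne', hp'.sub_eq hs.ne']
  obtain ⟨hx, -, h₁, -⟩ := hp
  obtain ⟨-, hy', h₁', -⟩ := hp'
  have hfactor : (p.1 - p'.1) * (s + q * (p.1 + p'.2)) = 0 := by
    linear_combination h₁' - h₁ + q * p.1 * hdiff
  have hfirst : p.1 = p'.1 :=
    sub_eq_zero.1 ((mul_eq_zero.1 hfactor).resolve_right (by positivity))
  exact Prod.ext hfirst (by linarith)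

theorem exists_of_nonneg (hs : 0 < s) (hq : 0 < q) (ha : 0 ≤ a) (hb : 0 ≤ b) :
    ∃ p, IsNonnegEquilibrium s q a b p := by
  obtain ⟨d, hsd⟩ : ∃ d, s * d = a - b := ⟨(a - b) / s, mul_div_cancel₀ _ hs.ne'⟩
  set S := √((s - q * d) ^ 2 + 4 * q * a)
  have hS : S ^ 2 = (s - q * d) ^ 2 + 4 * q * a := Real.sq_sqrt (by positivity)
  have hS' : S ^ 2 = (s + q * d) ^ 2 + 4 * q * b := by linear_combination hS - 4 * q * hsd
  have hle : s - q * d ≤ S := Real.le_sqrt_of_sq_le (by nlinarith)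
  have hle' : s + q * d ≤ S := Real.le_sqrt_of_sq_le (by nlinarith)
  refine ⟨((S - (s - q * d)) / (2 * q), (S - (s + q * d)) / (2 * q)),
    by positivity, by positivity, ?_, ?_⟩
  · field_simp
    linear_combination -hS
  · field_simp
    linear_combination -hS'

theorem existsUnique (hs : 0 < s) (hq : 0 < q) (ha : 0 ≤ a) (hb : 0 ≤ b) :
    ∃! p, IsNonnegEquilibrium s q a b p :=
  let ⟨p, hp⟩ := exists_of_nonneg hs hq ha hb
  ⟨p, hp, fun _ hp' => hp'.eq hs hq hp⟩

end IsNonnegEquilibrium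

/-- The fast subsystem of the proportional block has a unique nonnegative equilibrium. -/
theorem proportional_block_unique_equilibrium
    (r s q ep em : ℝ)
    (hr : 0 ≤ r) (hs : 0 < s) (hq : 0 < q) (hep : 0 ≤ ep) (hem : 0 ≤ em) :
    ∃! p : ℝ × ℝ, 0 ≤ p.1 ∧ 0 ≤ p.2 ∧
      r * s * ep - s * p.1 - q * p.1 * p.2 = 0 ∧
      r * s * em - s * p.2 - q * p.1 * p.2 = 0 :=
  IsNonnegEquilibrium.existsUnique hs hq (by positivity) (by positivity)
end

section
/- The unique nonnegative equilibrium of the proportional block fast subsystem is locally asymptotically stable: the Jacobian of the vector field (p⁺, p⁻) ↦ (r·s·e⁺ − s·p⁺ − q·p⁺·p⁻, r·s·e⁻ − s·p⁻ − q·p⁺·p⁻) at the equilibrium has trace < 0 and determinant > 0 (hence both eigenvalues have negative real part). -/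
/-! The Jacobian is `-s • 1` minus `q` times the rank-one matrix whose two rows are both
`(p⁻, p⁺)`. Hence the `q²` terms of its determinant cancel, leaving `s (s + q (p⁺ + p⁻))`,
and its trace is `-2s - q (p⁺ + p⁻)`; both signs follow from `s > 0` and `q, p⁺, p⁻ ≥ 0`. -/

theorem proportional_block_jacobian_det_eq (s q x y : ℝ) :
    (-s - q * y) * (-s - q * x) - (-q * x) * (-q * y) = s * (s + q * (x + y)) := by
  ring

theorem proportional_block_equilibrium_stable_general
    (s q pp pm : ℝ)
    (hs : 0 < s) (hq : 0 < q)
    (hpp : 0 ≤ pp) (hpm : 0 ≤ pm) :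
    ((-s - q * pm) + (-s - q * pp) < 0) ∧
    ((-s - q * pm) * (-s - q * pp) - (-q * pp) * (-q * pm) > 0) := by
  have hqpp : 0 ≤ q * pp := mul_nonneg hq.le hpp
  have hqpm : 0 ≤ q * pm := mul_nonneg hq.le hpm
  refine ⟨by linarith, ?_⟩
  rw [proportional_block_jacobian_det_eq]
  positivity

/-- The Jacobian of the proportional block vector field at the nonnegative equilibrium
has negative trace and positive determinant, hence the equilibrium is locally
asymptotically stable. -/
theorem proportional_block_equilibrium_stable
    (r s q ep em pp pm : ℝ)
    (hr : 0 ≤ r) (hs : 0 < s) (hq : 0 < q) (hep : 0 ≤ ep) (hem : 0 ≤ em)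
    (hpp : 0 ≤ pp) (hpm : 0 ≤ pm)
    (heq1 : r * s * ep = s * pp + q * pp * pm)
    (heq2 : r * s * em = s * pm + q * pp * pm) :
    ((-s - q * pm) + (-s - q * pp) < 0) ∧
    ((-s - q * pm) * (-s - q * pp) - (-q * pp) * (-q * pm) > 0) :=
  proportional_block_equilibrium_stable_general s q pp pm hs hq hpp hpm
end

section
/- Combined asymptotic correctness of the derivative block: with smooth input e(t) = x_{E+}(t) − x_{E−}(t) having bounded second derivative on [0,T], the quasi-steady-state output z(t) = v·(r·x_{E+}(t) − x_{A+}(t)) − v·(r·x_{E−}(t) − x_{A−}(t)) satisfies |z(t) − r·∂t e(t)| ≤ v·C·e^{−v·t} + r·M₂/v for constants C depending on initial conditions and M₂ bounding |∂t² e|, so z converges to r·∂t e uniformly on [δ, T] for any δ > 0 as v → ∞. -/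
/-!
The tracking error `y = z - r e'` obeys the linear equation `y' = -v y - r e''`, whose forcing is
bounded by `r M₂`. Hence `e^{vt} y` has derivative of norm at most `r M₂ e^{vt}`, and comparing it
with the barrier `|y 0| + (r M₂ / v) e^{vt}` gives `|y t| ≤ |y 0| e^{-vt} + r M₂ / v`; the triangle
inequality bounds `|y 0|` by the initial mismatches.
-/

open Real Set

section LinearDecay

variable {E : Type*} [NormedAddCommGroup E] [NormedSpace ℝ E] {y f : ℝ → E} {v K T : ℝ}

theorem hasDerivAt_exp_mul_smul {s : ℝ} (hy : HasDerivAt y (-v • y s + f s) s) :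
    HasDerivAt (fun s => exp (v * s) • y s) (exp (v * s) • f s) s := by
  have hexp : HasDerivAt (fun s => exp (v * s)) (exp (v * s) * v) s := by
    simpa using ((hasDerivAt_id s).const_mul v).exp
  refine (hexp.smul hy).congr_deriv ?_
  module

theorem norm_le_of_hasDerivAt_neg_smul_add (hv : 0 < v)
    (hy : ∀ s ∈ Icc 0 T, HasDerivAt y (-v • y s + f s) s) (hf : ∀ s ∈ Icc 0 T, ‖f s‖ ≤ K) :
    ∀ t ∈ Icc 0 T, ‖y t‖ ≤ ‖y 0‖ * exp (-v * t) + K / v := by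
  intro t ht
  have hK : 0 ≤ K / v := div_nonneg ((norm_nonneg _).trans (hf t ht)) hv.le
  have hw (s) (hs : s ∈ Icc 0 T) := hasDerivAt_exp_mul_smul (hy s hs)
  have hB (s : ℝ) : HasDerivAt (fun s => ‖y 0‖ + K / v * exp (v * s)) (K * exp (v * s)) s := by
    refine ((((hasDerivAt_id s).const_mul v).exp.const_mul (K / v)).const_add ‖y 0‖).congr_deriv ?_
    simp only [id]
    field_simp
  have hwt : ‖exp (v * t) • y t‖ ≤ ‖y 0‖ + K / v * exp (v * t) :=
    image_norm_le_of_norm_deriv_right_le_deriv_boundary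
      (fun s hs => (hw s hs).continuousAt.continuousWithinAt)
      (fun s hs => (hw s (Ico_subset_Icc_self hs)).hasDerivWithinAt)
      (by simpa using hK) hB
      (fun s hs => by
        rw [norm_smul, norm_of_nonneg (exp_pos _).le, mul_comm]
        exact mul_le_mul_of_nonneg_right (hf s (Ico_subset_Icc_self hs)) (exp_pos _).le)
      ht
  calc ‖y t‖ = exp (-v * t) * ‖exp (v * t) • y t‖ := by
        rw [norm_smul, norm_of_nonneg (exp_pos _).le, ← mul_assoc, ← exp_add]
        simp
    _ ≤ exp (-v * t) * (‖y 0‖ + K / v * exp (v * t)) := by gcongr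
    _ = ‖y 0‖ * exp (-v * t) + K / v := by
        rw [mul_add, mul_left_comm, ← exp_add]
        simp [mul_comm]

end LinearDecay

theorem hasDerivAt_qss_tracking_error {xEp xEm xAp xAm z e e' e'' : ℝ → ℝ} {r v s : ℝ}
    (he : ∀ t, e t = xEp t - xEm t) (he' : HasDerivAt e (e' s) s)
    (he'' : HasDerivAt e' (e'' s) s)
    (hAp : HasDerivAt xAp (v * r * xEp s - v * xAp s) s)
    (hAm : HasDerivAt xAm (v * r * xEm s - v * xAm s) s)
    (hz : ∀ t, z t = v * (r * xEp t - xAp t) - v * (r * xEm t - xAm t)) :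
    HasDerivAt (fun t => z t - r * e' t) (-v * (z s - r * e' s) + -r * e'' s) s := by
  have hz' (t : ℝ) : z t = v * (r * e t - (xAp t - xAm t)) := by rw [hz, he]; ring
  simp only [hz']
  refine ((((he'.const_mul r).sub (hAp.sub hAm)).const_mul v).sub (he''.const_mul r)).congr_deriv ?_
  rw [he s]
  ring

theorem derivative_block_asymptotic_correct_general
    (xEp xEm xAp xAm z e e' e'' : ℝ → ℝ) (r v M2 T : ℝ)
    (hr : 0 ≤ r) (hv : 0 < v)
    (he : ∀ t, e t = xEp t - xEm t)
    (he' : ∀ t ∈ Set.Icc (0:ℝ) T, HasDerivAt e (e' t) t)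
    (he'' : ∀ t ∈ Set.Icc (0:ℝ) T, HasDerivAt e' (e'' t) t)
    (he''_bdd : ∀ t ∈ Set.Icc (0:ℝ) T, |e'' t| ≤ M2)
    (hAp : ∀ t ∈ Set.Icc (0:ℝ) T, HasDerivAt xAp (v * r * xEp t - v * xAp t) t)
    (hAm : ∀ t ∈ Set.Icc (0:ℝ) T, HasDerivAt xAm (v * r * xEm t - v * xAm t) t)
    (hz : ∀ t, z t = v * (r * xEp t - xAp t) - v * (r * xEm t - xAm t)) :
    ∀ t ∈ Set.Icc (0:ℝ) T,
      |z t - r * e' t| ≤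
        v * (|xAp 0 - r * xEp 0| + |xAm 0 - r * xEm 0| + r * |e' 0| / v)
          * Real.exp (-v * t) + r * M2 / v := by
  intro t ht
  have hforcing (s) (hs : s ∈ Icc 0 T) : ‖-r * e'' s‖ ≤ r * M2 := by
    rw [norm_mul, norm_neg, Real.norm_of_nonneg hr, Real.norm_eq_abs]
    exact mul_le_mul_of_nonneg_left (he''_bdd s hs) hr
  have hdecay := norm_le_of_hasDerivAt_neg_smul_add hv
    (fun s hs => hasDerivAt_qss_tracking_error he (he' s hs) (he'' s hs) (hAp s hs) (hAm s hs) hz)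
    hforcing t ht
  have hinit : |z 0 - r * e' 0| ≤
      v * (|xAp 0 - r * xEp 0| + |xAm 0 - r * xEm 0| + r * |e' 0| / v) := by
    calc |z 0 - r * e' 0|
        = |-(v * (xAp 0 - r * xEp 0)) + v * (xAm 0 - r * xEm 0) + -(r * e' 0)| := by
          rw [hz 0]
          congr 1
          ring
      _ ≤ |v * (xAp 0 - r * xEp 0)| + |v * (xAm 0 - r * xEm 0)| + |r * e' 0| := by
          simpa only [abs_neg] using
            abs_add_three (-(v * (xAp 0 - r * xEp 0))) (v * (xAm 0 - r * xEm 0)) (-(r * e' 0))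
      _ = _ := by
          rw [abs_mul, abs_mul, abs_mul, abs_of_pos hv, abs_of_nonneg hr]
          field_simp
  simp only [Real.norm_eq_abs] at hdecay
  calc |z t - r * e' t| ≤ |z 0 - r * e' 0| * exp (-v * t) + r * M2 / v := hdecay
    _ ≤ _ := by gcongr

/-- Combined asymptotic correctness of the derivative block: the quasi-steady-state
output z tracks r·∂t e with error  v·C·e^{-v·t} + r·M₂/v  on [0,T]. -/
theorem derivative_block_asymptotic_correct
    (xEp xEm xAp xAm z e e' e'' : ℝ → ℝ) (r v M2 T : ℝ)
    (hr : 0 ≤ r) (hv : 0 < v) (hM2 : 0 ≤ M2) (hT : 0 ≤ T)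
    (hEp_nonneg : ∀ t ∈ Set.Icc (0:ℝ) T, 0 ≤ xEp t)
    (hEm_nonneg : ∀ t ∈ Set.Icc (0:ℝ) T, 0 ≤ xEm t)
    (he : ∀ t, e t = xEp t - xEm t)
    (he' : ∀ t ∈ Set.Icc (0:ℝ) T, HasDerivAt e (e' t) t)
    (he'' : ∀ t ∈ Set.Icc (0:ℝ) T, HasDerivAt e' (e'' t) t)
    (he''_bdd : ∀ t ∈ Set.Icc (0:ℝ) T, |e'' t| ≤ M2)
    (hAp : ∀ t ∈ Set.Icc (0:ℝ) T, HasDerivAt xAp (v * r * xEp t - v * xAp t) t)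
    (hAm : ∀ t ∈ Set.Icc (0:ℝ) T, HasDerivAt xAm (v * r * xEm t - v * xAm t) t)
    (hz : ∀ t, z t = v * (r * xEp t - xAp t) - v * (r * xEm t - xAm t)) :
    ∀ t ∈ Set.Icc (0:ℝ) T,
      |z t - r * e' t| ≤
        v * (|xAp 0 - r * xEp 0| + |xAm 0 - r * xEm 0| + r * |e' 0| / v)
          * Real.exp (-v * t) + r * M2 / v :=
  derivative_block_asymptotic_correct_general xEp xEm xAp xAm z e e' e'' r v M2 T hr hv he he' he''
    he''_bdd hAp hAm hz
end

section
/- Boundedness of the proportional block output: if the inputs satisfy x_{E+}(t), x_{E−}(t) ≤ B for all t ≥ 0, then any nonnegative solution of the proportional block ODEs with x_{P±}(0) ≤ r·B satisfies x_{P+}(t), x_{P−}(t) ≤ r·B for all t ≥ 0. -/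
/-!
Annihilation only lowers the concentrations, so each output obeys the linear differential
inequality `x' ≤ s (r B - x)`. For such an inequality `exp (s t) (x t - r B)` is antitone,
hence stays `≤ 0` once it starts there.
-/

open Real Set

lemma le_of_hasDerivAt_le_mul_sub {f f' : ℝ → ℝ} {a s C : ℝ}
    (hf : ∀ t, a ≤ t → HasDerivAt f (f' t) t)
    (hf' : ∀ t, a ≤ t → f' t ≤ s * (C - f t)) (ha : f a ≤ C) :
    ∀ t, a ≤ t → f t ≤ C := by
  set g : ℝ → ℝ := fun t ↦ exp (s * t) * (f t - C)
  have hg : ∀ t, a ≤ t → HasDerivAt g (exp (s * t) * (f' t - s * (C - f t))) t := by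
    intro t ht
    exact (((hasDerivAt_id t).const_mul s).exp.mul ((hf t ht).sub_const C)).congr_deriv
      (by simp only [id, mul_one]; ring)
  have hg_anti : AntitoneOn g (Ici a) := by
    refine antitoneOn_of_hasDerivWithinAt_nonpos (convex_Ici a)
      (fun t ht ↦ (hg t ht).continuousAt.continuousWithinAt)
      (fun t ht ↦ (hg t (interior_subset ht)).hasDerivWithinAt) fun t ht ↦ ?_
    have ht : a ≤ t := interior_subset ht
    exact mul_nonpos_of_nonneg_of_nonpos (exp_pos _).le (sub_nonpos.2 (hf' t ht))
  intro t ht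
  have hgt : g t ≤ g a := hg_anti self_mem_Ici ht ht
  have hga : g a ≤ 0 := mul_nonpos_of_nonneg_of_nonpos (exp_pos _).le (sub_nonpos.2 ha)
  exact sub_nonpos.1 (nonpos_of_mul_nonpos_right (hgt.trans hga) (exp_pos _))

theorem proportional_block_bounded_general
    (xEp xEm xPp xPm : ℝ → ℝ) (r s q B : ℝ)
    (hr : 0 ≤ r) (hs : 0 < s) (hq : 0 < q)
    (hEp_bdd : ∀ t, 0 ≤ t → xEp t ≤ B) (hEm_bdd : ∀ t, 0 ≤ t → xEm t ≤ B)
    (hP_nonneg : ∀ t, 0 ≤ t → 0 ≤ xPp t ∧ 0 ≤ xPm t)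
    (hPp : ∀ t, 0 ≤ t →
      HasDerivAt xPp (r * s * xEp t - s * xPp t - q * xPp t * xPm t) t)
    (hPm : ∀ t, 0 ≤ t →
      HasDerivAt xPm (r * s * xEm t - s * xPm t - q * xPp t * xPm t) t)
    (hPp0 : xPp 0 ≤ r * B) (hPm0 : xPm 0 ≤ r * B) :
    ∀ t, 0 ≤ t → xPp t ≤ r * B ∧ xPm t ≤ r * B := by
  have hrate : ∀ u, 0 ≤ u → ∀ x y, x ≤ B →
      r * s * x - s * y - q * xPp u * xPm u ≤ s * (r * B - y) := by
    intro u hu x y hx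
    have hinput : r * s * x ≤ r * s * B := mul_le_mul_of_nonneg_left hx (by positivity)
    have hannihilation : 0 ≤ q * xPp u * xPm u :=
      mul_nonneg (mul_nonneg hq.le (hP_nonneg u hu).1) (hP_nonneg u hu).2
    linarith
  exact fun t ht ↦
    ⟨le_of_hasDerivAt_le_mul_sub hPp (fun u hu ↦ hrate u hu _ _ (hEp_bdd u hu)) hPp0 t ht,
      le_of_hasDerivAt_le_mul_sub hPm (fun u hu ↦ hrate u hu _ _ (hEm_bdd u hu)) hPm0 t ht⟩

/-- Boundedness of the proportional block output: if the inputs are bounded by B and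
the nonnegative solution starts below r·B, it stays below r·B. -/
theorem proportional_block_bounded
    (xEp xEm xPp xPm : ℝ → ℝ) (r s q B : ℝ)
    (hr : 0 ≤ r) (hs : 0 < s) (hq : 0 < q) (hB : 0 ≤ B)
    (hEp_bdd : ∀ t, 0 ≤ t → xEp t ≤ B) (hEm_bdd : ∀ t, 0 ≤ t → xEm t ≤ B)
    (hEp_nonneg : ∀ t, 0 ≤ t → 0 ≤ xEp t) (hEm_nonneg : ∀ t, 0 ≤ t → 0 ≤ xEm t)
    (hP_nonneg : ∀ t, 0 ≤ t → 0 ≤ xPp t ∧ 0 ≤ xPm t)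
    (hPp : ∀ t, 0 ≤ t →
      HasDerivAt xPp (r * s * xEp t - s * xPp t - q * xPp t * xPm t) t)
    (hPm : ∀ t, 0 ≤ t →
      HasDerivAt xPm (r * s * xEm t - s * xPm t - q * xPp t * xPm t) t)
    (hPp0 : xPp 0 ≤ r * B) (hPm0 : xPm 0 ≤ r * B) :
    ∀ t, 0 ≤ t → xPp t ≤ r * B ∧ xPm t ≤ r * B :=
  proportional_block_bounded_general xEp xEm xPp xPm r s q B hr hs hq hEp_bdd hEm_bdd hP_nonneg hPp
    hPm hPp0 hPm0
end

section
/- For the addition block with constant inputs p⁺, p⁻, i⁺, i⁻ ≥ 0, any nonnegative equilibrium (b⁺, b⁻) of ∂t x_{B+} = s·(p⁺ + i⁺) − s·x_{B+} − q·x_{B+}·x_{B−}, ∂t x_{B−} = s·(p⁻ + i⁻) − s·x_{B−} − q·x_{B+}·x_{B−} satisfies b⁺ − b⁻ = (p⁺ − p⁻) + (i⁺ − i⁻); moreover this equilibrium exists and is unique in ℝ≥0². -/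
/-!
Subtracting the two equilibrium equations kills the shared annihilation term `q b⁺ b⁻` and
leaves `s (b⁺ - b⁻) = s d` with `d = (p⁺ + i⁺) - (p⁻ + i⁻)`. Along the line `b⁻ = b⁺ - d` the first
equation is a quadratic in `b⁺`, whose larger root gives the nonnegative equilibrium; it is
the only one because `s b⁺ + q b⁺ b⁻` is strictly increasing along that line in the
nonnegative quadrant.
-/

/-- `A` and `B` are the total inputs `p⁺ + i⁺` and `p⁻ + i⁻`, and `(x, y)` is `(b⁺, b⁻)`. -/
structure IsAdditionBlockEquilibrium {R : Type*} [CommRing R] (s q A B x y : R) : Prop where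
  pos : s * A - s * x - q * x * y = 0
  neg : s * B - s * y - q * x * y = 0

namespace IsAdditionBlockEquilibrium

theorem of_sub_eq {R : Type*} [CommRing R] {s q A B x y : R} (hxy : x - y = A - B)
    (hpos : s * A - s * x - q * x * y = 0) : IsAdditionBlockEquilibrium s q A B x y :=
  ⟨hpos, by linear_combination hpos + s * hxy⟩

theorem sub_eq {K : Type*} [Field K] {s q A B x y : K} (hs : s ≠ 0)
    (h : IsAdditionBlockEquilibrium s q A B x y) : x - y = A - B :=
  mul_left_cancel₀ hs (by linear_combination h.neg - h.pos)

theorem eq_of_nonneg {K : Type*} [Field K] [LinearOrder K] [IsStrictOrderedRing K]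
    {s q A B x y x' y' : K} (hs : 0 < s) (hq : 0 < q)
    (h : IsAdditionBlockEquilibrium s q A B x y) (h' : IsAdditionBlockEquilibrium s q A B x' y')
    (hx : 0 ≤ x) (hy' : 0 ≤ y') : x = x' ∧ y = y' := by
  have hshift : y - y' = x - x' := by
    linear_combination h'.sub_eq hs.ne' - h.sub_eq hs.ne'
  have hfactor : (x - x') * (s + q * (x + y')) = 0 := by
    linear_combination h'.pos - h.pos - q * x * hshift
  have hpos : 0 < s + q * (x + y') := by positivity
  have hxx' : x = x' := sub_eq_zero.mp ((mul_eq_zero.mp hfactor).resolve_right hpos.ne')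
  exact ⟨hxx', by linear_combination hshift + hxx'⟩

end IsAdditionBlockEquilibrium

theorem exists_nonneg_isAdditionBlockEquilibrium {s q A B : ℝ} (hs : 0 ≤ s) (hq : 0 < q)
    (hA : 0 ≤ A) (hB : 0 ≤ B) :
    ∃ x y, 0 ≤ x ∧ 0 ≤ y ∧ IsAdditionBlockEquilibrium s q A B x y := by
  set d := A - B
  set r := √((s - q * d) ^ 2 + 4 * q * s * A)
  have hdiscr : (s - q * d) ^ 2 + 4 * q * s * A = (s + q * d) ^ 2 + 4 * q * s * B := by ring
  have hr : r * r = (s - q * d) ^ 2 + 4 * q * s * A := Real.mul_self_sqrt (by positivity)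
  set x := (-(s - q * d) + r) / (2 * q)
  have hroot : q * (x * x) + (s - q * d) * x + -(s * A) = 0 :=
    (quadratic_eq_zero_iff hq.ne' (by rw [discrim, hr]; ring) x).mpr (Or.inl rfl)
  have htwo_q_x : 2 * q * x = r - (s - q * d) := by simp only [x]; field_simp; ring
  have hr_ge_sub : s - q * d ≤ r :=
    Real.le_sqrt_of_sq_le (le_add_of_nonneg_right (by positivity))
  have hr_ge_add : s + q * d ≤ r :=
    Real.le_sqrt_of_sq_le (hdiscr ▸ le_add_of_nonneg_right (by positivity))
  refine ⟨x, x - d, ?_, ?_, .of_sub_eq (by ring) (by linear_combination -hroot)⟩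
  · nlinarith
  · nlinarith

/-- The addition block: any nonnegative equilibrium encodes the sum of the two
dual-rail inputs, and such an equilibrium exists and is unique. -/
theorem addition_block_equilibrium
    (s q pp pm ip im : ℝ)
    (hs : 0 < s) (hq : 0 < q)
    (hpp : 0 ≤ pp) (hpm : 0 ≤ pm) (hip : 0 ≤ ip) (him : 0 ≤ im) :
    (∀ bp bm : ℝ, 0 ≤ bp → 0 ≤ bm →
      s * (pp + ip) - s * bp - q * bp * bm = 0 →
      s * (pm + im) - s * bm - q * bp * bm = 0 →
      bp - bm = (pp - pm) + (ip - im)) ∧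
    (∃! b : ℝ × ℝ, 0 ≤ b.1 ∧ 0 ≤ b.2 ∧
      s * (pp + ip) - s * b.1 - q * b.1 * b.2 = 0 ∧
      s * (pm + im) - s * b.2 - q * b.1 * b.2 = 0) := by
  refine ⟨fun bp bm _ _ hpos hneg => ?_, ?_⟩
  · rw [IsAdditionBlockEquilibrium.sub_eq hs.ne' ⟨hpos, hneg⟩]
    ring
  obtain ⟨x, y, hx, hy, h⟩ :=
    exists_nonneg_isAdditionBlockEquilibrium hs.le hq (add_nonneg hpp hip) (add_nonneg hpm him)
  refine ⟨(x, y), ⟨hx, hy, h.pos, h.neg⟩, ?_⟩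
  rintro ⟨x', y'⟩ ⟨hx', -, hpos', hneg'⟩
  obtain ⟨rfl, rfl⟩ := IsAdditionBlockEquilibrium.eq_of_nonneg hs hq ⟨hpos', hneg'⟩ h hx' hy
  rfl
end

section
/- Tikhonov-style singular perturbation limit for a scalar fast linear variable: consider the system ∂t x = f(x, z), ∂t z = s·(g(x) − z) with f, g smooth and globally Lipschitz. As s → ∞, the solution (x_s, z_s) on any bounded interval [δ, T] (δ > 0) converges uniformly to (x̄, g(x̄)) where x̄ solves the reduced system ∂t x̄ = f(x̄, g(x̄)) with the same initial condition x̄(0) = x(0). -/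
open Real Set Filter intervalIntegral

lemma int_gronwall {φ : ℝ → ℝ} {T a b c : ℝ} (hc : 0 < c) (ha : 0 ≤ a) (hb : 0 ≤ b)
    (hφ : ContinuousOn φ (Icc 0 T))
    (hφ0 : ∀ t ∈ Icc 0 T, 0 ≤ φ t)
    (h : ∀ t ∈ Icc 0 T, φ t ≤ a + ∫ τ in (0:ℝ)..t, (b + c * φ τ)) :
    ∀ t ∈ Icc 0 T, φ t ≤ (a + b / c) * Real.exp (c * T) := by
  intro t ht
  have hT : 0 ≤ T := le_trans ht.1 ht.2
  have hproj : ∀ u : ℝ, max 0 (min u T) ∈ Icc 0 T := fun u =>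
    ⟨le_max_left _ _, max_le hT (min_le_right u T)⟩
  set ψ : ℝ → ℝ := fun u => φ (max 0 (min u T)) with hψdef
  have hψcont : Continuous ψ :=
    hφ.comp_continuous (continuous_const.max (continuous_id.min continuous_const)) hproj
  have hψeq : ∀ u ∈ Icc 0 T, ψ u = φ u := by
    intro u hu
    simp [hψdef, min_eq_left hu.2, max_eq_right hu.1]
  have hψ0 : ∀ u, 0 ≤ ψ u := fun u => hφ0 _ (hproj u)
  set G : ℝ → ℝ := fun τ => b + c * ψ τ with hGdef
  have hGcont : Continuous G := continuous_const.add (continuous_const.mul hψcont)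
  have hG0 : ∀ τ, 0 ≤ G τ := fun τ => add_nonneg hb (mul_nonneg hc.le (hψ0 τ))
  set Φ : ℝ → ℝ := fun u => a + ∫ τ in (0:ℝ)..u, G τ with hΦdef
  have hΦd : ∀ u : ℝ, HasDerivAt Φ (G u) u := fun u =>
    ((hGcont.integral_hasStrictDerivAt 0 u).hasDerivAt).const_add a
  have hΦcont : Continuous Φ := continuous_iff_continuousAt.2 fun u => (hΦd u).continuousAt
  have hΦ0 : ∀ u ∈ Icc 0 T, 0 ≤ Φ u := by
    intro u hu
    have : 0 ≤ ∫ τ in (0:ℝ)..u, G τ :=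
      intervalIntegral.integral_nonneg hu.1 (fun τ _ => hG0 τ)
    simp only [hΦdef]; linarith
  have hle : ∀ u ∈ Icc 0 T, φ u ≤ Φ u := by
    intro u hu
    have hcong : (∫ τ in (0:ℝ)..u, (b + c * φ τ)) = ∫ τ in (0:ℝ)..u, G τ := by
      apply intervalIntegral.integral_congr
      intro τ hτ
      have hτ' : τ ∈ Icc 0 T := by
        rcases hτ with ⟨h1, h2⟩
        rw [min_eq_left hu.1] at h1
        rw [max_eq_right hu.1] at h2
        exact ⟨h1, h2.trans hu.2⟩
      show b + c * φ τ = G τ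
      simp only [hGdef, hψeq τ hτ']
    have := h u hu
    rw [hcong] at this
    exact this
  have key : ∀ u ∈ Icc 0 T, ‖Φ u‖ ≤ gronwallBound a c b (u - 0) := by
    apply norm_le_gronwallBound_of_norm_deriv_right_le hΦcont.continuousOn
      (fun x _ => (hΦd x).hasDerivWithinAt)
    · simp [hΦdef, Real.norm_eq_abs, abs_of_nonneg ha]
    · intro x hx
      have hx' : x ∈ Icc 0 T := ⟨hx.1, hx.2.le⟩
      rw [Real.norm_eq_abs, Real.norm_eq_abs, abs_of_nonneg (hG0 x), abs_of_nonneg (hΦ0 x hx')]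
      have h1 : ψ x = φ x := hψeq x hx'
      have h2 : φ x ≤ Φ x := hle x hx'
      simp only [hGdef, h1]
      nlinarith
  have hfin : gronwallBound a c b (t - 0) ≤ (a + b / c) * Real.exp (c * T) := by
    rw [sub_zero, gronwallBound_of_K_ne_0 hc.ne']
    have he : Real.exp (c * t) ≤ Real.exp (c * T) :=
      Real.exp_le_exp.2 (by nlinarith [ht.2])
    have he1 : (1:ℝ) ≤ Real.exp (c * t) := Real.one_le_exp (by nlinarith [ht.1])
    have hbc : 0 ≤ b / c := div_nonneg hb hc.le
    nlinarith [Real.exp_pos (c * t), Real.exp_pos (c * T)]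
  calc φ t ≤ Φ t := hle t ht
    _ ≤ ‖Φ t‖ := le_abs_self _
    _ ≤ gronwallBound a c b (t - 0) := key t ht
    _ ≤ _ := hfin


set_option maxHeartbeats 1000000 in
lemma tikhonov_key
    (f : ℝ → ℝ → ℝ) (g : ℝ → ℝ) (Kf Kg : NNReal)
    (hg_smooth : ContDiff ℝ (⊤ : ℕ∞) g)
    (hf_lip : LipschitzWith Kf (fun p : ℝ × ℝ => f p.1 p.2))
    (hg_lip : LipschitzWith Kg g)
    (T x0 z0 s : ℝ) (hT : 0 < T) (hs : 0 < s)
    (x z xbar : ℝ → ℝ)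
    (hx : ∀ t ∈ Set.Icc (0:ℝ) T, HasDerivAt x (f (x t) (z t)) t)
    (hz : ∀ t ∈ Set.Icc (0:ℝ) T, HasDerivAt z (s * (g (x t) - z t)) t)
    (hx0 : x 0 = x0) (hz0 : z 0 = z0)
    (hxb : ∀ t ∈ Set.Icc (0:ℝ) T, HasDerivAt xbar (f (xbar t) (g (xbar t))) t)
    (hxb0 : xbar 0 = x0)
    (A C1 C2 bb cc R M CY e0abs : ℝ)
    (hA : A = |f x0 (g x0)|) (hC1 : C1 = Kf * (1 + Kg)) (hC2 : C2 = C1 + Kf)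
    (he0abs : e0abs = |z0 - g x0|)
    (hbb : bb = (1 + Kg) * A) (hcc : cc = (1 + Kg) * C2 + 1)
    (hR : R = (e0abs + bb / cc) * Real.exp (cc * T))
    (hM : M = Kg * (A + C2 * R))
    (hCY : CY = Kf * (e0abs + M * T) * Real.exp ((C1 + 1) * T)) :
    ∀ t ∈ Set.Icc (0:ℝ) T,
      |x t - xbar t| ≤ CY / s ∧ |z t - g (x t)| ≤ Real.exp (-(s * t)) * e0abs + M / s := by
  have hKf0 : (0:ℝ) ≤ Kf := Kf.coe_nonneg
  have hKg0 : (0:ℝ) ≤ Kg := Kg.coe_nonneg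
  have hA0 : 0 ≤ A := hA ▸ abs_nonneg _
  have hC10 : 0 ≤ C1 := by rw [hC1]; positivity
  have hC20 : 0 ≤ C2 := by rw [hC2]; linarith
  have he0abs0 : 0 ≤ e0abs := he0abs ▸ abs_nonneg _
  have hbb0 : 0 ≤ bb := by rw [hbb]; positivity
  have hcc0 : 0 < cc := by rw [hcc]; nlinarith
  have hR0 : 0 ≤ R := by
    rw [hR]; positivity
  have hM0 : 0 ≤ M := by rw [hM]; positivity
  have hCY0 : 0 ≤ CY := by rw [hCY]; positivity
  -- basic continuity / differentiability facts
  have hgd : Differentiable ℝ g := hg_smooth.differentiable (by simp)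
  have hg'c : Continuous (deriv g) := hg_smooth.continuous_deriv (by simp)
  have hg'b : ∀ u : ℝ, |deriv g u| ≤ Kg := by
    intro u
    have hd : HasFDerivAt g (fderiv ℝ g u) u := (hgd u).hasFDerivAt
    have hb := hd.le_of_lipschitz hg_lip
    have h1 : deriv g u = fderiv ℝ g u 1 := by rw [← fderiv_apply_one_eq_deriv]
    rw [h1]
    calc |fderiv ℝ g u 1| ≤ ‖fderiv ℝ g u‖ * ‖(1:ℝ)‖ := (fderiv ℝ g u).le_opNorm 1
      _ ≤ Kg := by simpa using hb
  have hxc : ContinuousOn x (Icc 0 T) := fun u hu => ((hx u hu).continuousAt).continuousWithinAt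
  have hzc : ContinuousOn z (Icc 0 T) := fun u hu => ((hz u hu).continuousAt).continuousWithinAt
  have hxbc : ContinuousOn xbar (Icc 0 T) := fun u hu => ((hxb u hu).continuousAt).continuousWithinAt
  have hfc : Continuous (fun p : ℝ × ℝ => f p.1 p.2) := hf_lip.continuous
  have hgc : Continuous g := hg_lip.continuous
  set e : ℝ → ℝ := fun u => z u - g (x u) with hedef
  set h : ℝ → ℝ := fun u => deriv g (x u) * f (x u) (z u) with hhdef
  set φ : ℝ → ℝ := fun u => |x u - x0| + |e u| with hφdef
  have hfxz : ContinuousOn (fun u => f (x u) (z u)) (Icc 0 T) := by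
    have : ContinuousOn (fun u => (x u, z u)) (Icc 0 T) := hxc.prodMk hzc
    exact hfc.comp_continuousOn this
  have hec : ContinuousOn e (Icc 0 T) := hzc.sub (hgc.comp_continuousOn hxc)
  have hhc : ContinuousOn h (Icc 0 T) := (hg'c.comp_continuousOn hxc).mul hfxz
  have hφc : ContinuousOn φ (Icc 0 T) := (hxc.sub continuousOn_const).abs.add hec.abs
  have hφ0 : ∀ u ∈ Icc 0 T, 0 ≤ φ u := fun u _ => add_nonneg (abs_nonneg _) (abs_nonneg _)
  have he0 : e 0 = z0 - g x0 := by simp [hedef, hx0, hz0]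
  -- Lipschitz estimates in coordinates
  have hfest : ∀ a₁ b₁ a₂ b₂ : ℝ, |f a₁ b₁ - f a₂ b₂| ≤ Kf * |a₁ - a₂| + Kf * |b₁ - b₂| := by
    intro a₁ b₁ a₂ b₂
    have h1 := hf_lip.dist_le_mul (a₁, b₁) (a₂, b₂)
    have h2 : dist ((a₁, b₁) : ℝ × ℝ) (a₂, b₂) = max (dist a₁ a₂) (dist b₁ b₂) := Prod.dist_eq
    rw [h2, Real.dist_eq, Real.dist_eq, Real.dist_eq] at h1
    have h3 : max |a₁ - a₂| |b₁ - b₂| ≤ |a₁ - a₂| + |b₁ - b₂| :=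
      max_le (le_add_of_nonneg_right (abs_nonneg _)) (le_add_of_nonneg_left (abs_nonneg _))
    nlinarith [abs_nonneg (a₁ - a₂), abs_nonneg (b₁ - b₂)]
  have hgest : ∀ a₁ a₂ : ℝ, |g a₁ - g a₂| ≤ Kg * |a₁ - a₂| := by
    intro a₁ a₂
    have := hg_lip.dist_le_mul a₁ a₂
    simpa [Real.dist_eq] using this
  -- pointwise bound on f along the trajectory
  have hfb : ∀ u ∈ Icc 0 T, |f (x u) (z u)| ≤ A + C2 * φ u := by
    intro u hu
    have h1 : |f (x u) (z u)| ≤ |f x0 (g x0)| + |f (x u) (z u) - f x0 (g x0)| := by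
      have := abs_sub_abs_le_abs_sub (f (x u) (z u)) (f x0 (g x0))
      have h2 := abs_nonneg (f (x u) (z u) - f x0 (g x0))
      linarith [abs_abs (f (x u) (z u))]
    have h2 := hfest (x u) (z u) x0 (g x0)
    have h3 : |z u - g x0| ≤ |e u| + Kg * |x u - x0| := by
      have h4 : z u - g x0 = e u + (g (x u) - g x0) := by simp only [hedef]; ring
      calc |z u - g x0| = |e u + (g (x u) - g x0)| := by rw [h4]
        _ ≤ |e u| + |g (x u) - g x0| := abs_add_le _ _
        _ ≤ |e u| + Kg * |x u - x0| := by linarith [hgest (x u) x0]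
    have hφu : φ u = |x u - x0| + |e u| := rfl
    have h5 := mul_le_mul_of_nonneg_left h3 hKf0
    rw [hA, hC2, hC1]
    simp only [hφdef]
    nlinarith [abs_nonneg (x u - x0), abs_nonneg (e u),
      mul_nonneg (mul_nonneg hKf0 hKg0) (abs_nonneg (e u)),
      mul_nonneg hKf0 (abs_nonneg (x u - x0)), mul_nonneg hKf0 (abs_nonneg (e u))]
  have hhb : ∀ u ∈ Icc 0 T, |h u| ≤ Kg * (A + C2 * φ u) := by
    intro u hu
    have h1 : |h u| = |deriv g (x u)| * |f (x u) (z u)| := abs_mul _ _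
    have h2 := hg'b (x u)
    have h3 := hfb u hu
    have h4 : 0 ≤ A + C2 * φ u := by nlinarith [hφ0 u hu]
    rw [h1]
    exact mul_le_mul h2 h3 (abs_nonneg _) hKg0
  -- derivative of e
  have he' : ∀ u ∈ Icc (0:ℝ) T, HasDerivAt e (-(s * e u) - h u) u := by
    intro u hu
    have h2 : HasDerivAt (fun v => g (x v)) (deriv g (x u) * f (x u) (z u)) u :=
      HasDerivAt.comp u (hgd (x u)).hasDerivAt (hx u hu)
    have h3 := (hz u hu).sub h2
    refine h3.congr_deriv ?_
    simp only [hedef, hhdef]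
    ring
  -- derivative of w = exp(s t) e t
  set w : ℝ → ℝ := fun u => Real.exp (s * u) * e u with hwdef
  have hw' : ∀ u ∈ Icc (0:ℝ) T, HasDerivAt w (-(Real.exp (s * u) * h u)) u := by
    intro u hu
    have h1 : HasDerivAt (fun v : ℝ => Real.exp (s * v)) (Real.exp (s * u) * s) u := by
      simpa using ((hasDerivAt_id u).const_mul s).exp
    have h2 := h1.mul (he' u hu)
    refine h2.congr_deriv ?_
    ring
  -- FTC for x
  have hsub : ∀ t ∈ Icc (0:ℝ) T, uIcc (0:ℝ) t ⊆ Icc (0:ℝ) T := by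
    intro t ht
    rw [uIcc_of_le ht.1]
    exact Icc_subset_Icc le_rfl ht.2
  have hxint : ∀ t ∈ Icc (0:ℝ) T, x t - x0 = ∫ τ in (0:ℝ)..t, f (x τ) (z τ) := by
    intro t ht
    have h1 := intervalIntegral.integral_eq_sub_of_hasDerivAt
      (f := x) (f' := fun τ => f (x τ) (z τ))
      (fun u hu => hx u (hsub t ht hu))
      ((hfxz.mono (hsub t ht)).intervalIntegrable)
    rw [h1, hx0]
  -- FTC for w
  have hwint : ∀ t ∈ Icc (0:ℝ) T, w t = (z0 - g x0) + ∫ τ in (0:ℝ)..t, -(Real.exp (s * τ) * h τ) := by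
    intro t ht
    have hcont : ContinuousOn (fun τ => -(Real.exp (s * τ) * h τ)) (Icc 0 T) :=
      (((Real.continuous_exp.comp (continuous_const.mul continuous_id)).continuousOn).mul hhc).neg
    have h1 := intervalIntegral.integral_eq_sub_of_hasDerivAt
      (f := w) (f' := fun τ => -(Real.exp (s * τ) * h τ))
      (fun u hu => hw' u (hsub t ht hu))
      ((hcont.mono (hsub t ht)).intervalIntegrable)
    have h2 : w 0 = z0 - g x0 := by simp [hwdef, he0]
    rw [h1, h2]
    ring
  have habsint : ∀ (F : ℝ → ℝ), ContinuousOn F (Icc 0 T) → ∀ t ∈ Icc (0:ℝ) T,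
      |∫ τ in (0:ℝ)..t, F τ| ≤ ∫ τ in (0:ℝ)..t, |F τ| := by
    intro F hF t ht
    have h1 := intervalIntegral.norm_integral_le_integral_norm (f := F) (a := 0) (b := t)
      (μ := MeasureTheory.volume) ht.1
    simpa [Real.norm_eq_abs] using h1
  have hAC2cont : ContinuousOn (fun τ => A + C2 * φ τ) (Icc 0 T) :=
    continuousOn_const.add (continuousOn_const.mul hφc)
  have hAC2nn : ∀ u ∈ Icc (0:ℝ) T, 0 ≤ A + C2 * φ u := fun u hu =>
    add_nonneg hA0 (mul_nonneg hC20 (hφ0 u hu))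
  -- a priori integral inequality for φ
  have hstep : ∀ t ∈ Icc (0:ℝ) T, φ t ≤ e0abs + ∫ τ in (0:ℝ)..t, (bb + cc * φ τ) := by
    intro t ht
    have hint1 : IntervalIntegrable (fun τ => A + C2 * φ τ) MeasureTheory.volume 0 t :=
      ((hAC2cont.mono (hsub t ht)).intervalIntegrable)
    have hint2 : IntervalIntegrable (fun τ => (Kg:ℝ) * (A + C2 * φ τ))
        MeasureTheory.volume 0 t :=
      ((continuousOn_const.mul hAC2cont).mono (hsub t ht)).intervalIntegrable
    have hpart1 : |x t - x0| ≤ ∫ τ in (0:ℝ)..t, (A + C2 * φ τ) := by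
      rw [hxint t ht]
      refine le_trans (habsint _ hfxz t ht) ?_
      refine intervalIntegral.integral_mono_on ht.1
        ((hfxz.abs.mono (hsub t ht)).intervalIntegrable) hint1 ?_
      intro τ hτ
      exact hfb τ ⟨hτ.1, hτ.2.trans ht.2⟩
    have hIdef : (0:ℝ) ≤ ∫ τ in (0:ℝ)..t, Kg * (A + C2 * φ τ) := by
      refine intervalIntegral.integral_nonneg ht.1 ?_
      intro τ hτ
      exact mul_nonneg hKg0 (hAC2nn τ ⟨hτ.1, hτ.2.trans ht.2⟩)
    have hpart2 : |e t| ≤ e0abs + ∫ τ in (0:ℝ)..t, Kg * (A + C2 * φ τ) := by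
      set I := ∫ τ in (0:ℝ)..t, Kg * (A + C2 * φ τ) with hI
      have hst : 0 ≤ s * t := mul_nonneg hs.le ht.1
      have hE1 : 1 ≤ Real.exp (s * t) := Real.one_le_exp hst
      have hE0 : 0 < Real.exp (s * t) := Real.exp_pos _
      have hwb : |w t| ≤ e0abs + Real.exp (s * t) * I := by
        have h1 : |(z0 - g x0) + ∫ τ in (0:ℝ)..t, -(Real.exp (s * τ) * h τ)|
            ≤ |z0 - g x0| + |∫ τ in (0:ℝ)..t, -(Real.exp (s * τ) * h τ)| := abs_add_le _ _
        have hcont : ContinuousOn (fun τ => -(Real.exp (s * τ) * h τ)) (Icc 0 T) :=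
          (((Real.continuous_exp.comp (continuous_const.mul continuous_id)).continuousOn).mul hhc).neg
        have h2 := habsint _ hcont t ht
        have h3 : (∫ τ in (0:ℝ)..t, |(-(Real.exp (s * τ) * h τ))|)
            ≤ ∫ τ in (0:ℝ)..t, Real.exp (s * t) * (Kg * (A + C2 * φ τ)) := by
          refine intervalIntegral.integral_mono_on ht.1
            ((hcont.abs.mono (hsub t ht)).intervalIntegrable)
            (((continuousOn_const.mul (continuousOn_const.mul hAC2cont)).mono
              (hsub t ht)).intervalIntegrable) ?_
          intro τ hτ
          have hτT : τ ∈ Icc (0:ℝ) T := ⟨hτ.1, hτ.2.trans ht.2⟩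
          have h4 : |(-(Real.exp (s * τ) * h τ))| = Real.exp (s * τ) * |h τ| := by
            rw [abs_neg, abs_mul, abs_of_pos (Real.exp_pos _)]
          rw [h4]
          have h5 : Real.exp (s * τ) ≤ Real.exp (s * t) :=
            Real.exp_le_exp.2 (by nlinarith [hτ.1, hτ.2])
          have h6 := hhb τ hτT
          have h7 : (0:ℝ) ≤ Kg * (A + C2 * φ τ) := mul_nonneg hKg0 (hAC2nn τ hτT)
          nlinarith [Real.exp_pos (s * τ), abs_nonneg (h τ)]
        have h8 : (∫ τ in (0:ℝ)..t, Real.exp (s * t) * (Kg * (A + C2 * φ τ)))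
            = Real.exp (s * t) * I := by
          rw [hI, ← intervalIntegral.integral_const_mul]
        rw [← he0abs] at h1
        calc |w t| = |(z0 - g x0) + ∫ τ in (0:ℝ)..t, -(Real.exp (s * τ) * h τ)| := by
              rw [hwint t ht]
          _ ≤ e0abs + |∫ τ in (0:ℝ)..t, -(Real.exp (s * τ) * h τ)| := h1
          _ ≤ e0abs + ∫ τ in (0:ℝ)..t, |(-(Real.exp (s * τ) * h τ))| := by linarith
          _ ≤ e0abs + Real.exp (s * t) * I := by linarith [h3.trans_eq h8]
      have hwe : |w t| = Real.exp (s * t) * |e t| := by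
        rw [hwdef]
        simp [abs_mul, abs_of_pos hE0]
      rw [hwe] at hwb
      nlinarith [abs_nonneg (e t)]
    have hφt : φ t = |x t - x0| + |e t| := rfl
    have hsum : (∫ τ in (0:ℝ)..t, (A + C2 * φ τ)) + (∫ τ in (0:ℝ)..t, Kg * (A + C2 * φ τ))
        = ∫ τ in (0:ℝ)..t, ((A + C2 * φ τ) + Kg * (A + C2 * φ τ)) :=
      (intervalIntegral.integral_add hint1 hint2).symm
    have hmono2 : (∫ τ in (0:ℝ)..t, ((A + C2 * φ τ) + Kg * (A + C2 * φ τ)))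
        ≤ ∫ τ in (0:ℝ)..t, (bb + cc * φ τ) := by
      refine intervalIntegral.integral_mono_on ht.1 (hint1.add hint2)
        (((continuousOn_const.add (continuousOn_const.mul hφc)).mono
          (hsub t ht)).intervalIntegrable) ?_
      intro τ hτ
      have hτT : τ ∈ Icc (0:ℝ) T := ⟨hτ.1, hτ.2.trans ht.2⟩
      have := hφ0 τ hτT
      rw [hbb, hcc]
      nlinarith
    rw [hφt]
    linarith
  have hφR : ∀ t ∈ Icc (0:ℝ) T, φ t ≤ R := by
    intro t ht
    have := int_gronwall hcc0 he0abs0 hbb0 hφc hφ0 hstep t ht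
    rw [hR]
    exact this
  have hMb : ∀ u ∈ Icc (0:ℝ) T, |h u| ≤ M := by
    intro u hu
    have h1 := hhb u hu
    have h2 := hφR u hu
    rw [hM]
    nlinarith [mul_nonneg (mul_nonneg hKg0 hC20) (sub_nonneg.2 h2)]
  have hsne : s ≠ 0 := hs.ne'
  -- integral of exp(s τ)
  have hexpint : ∀ t ∈ Icc (0:ℝ) T,
      (∫ τ in (0:ℝ)..t, Real.exp (s * τ)) = (Real.exp (s * t) - 1) / s := by
    intro t ht
    have hd : ∀ τ ∈ uIcc (0:ℝ) t, HasDerivAt (fun v => Real.exp (s * v) / s)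
        (Real.exp (s * τ)) τ := by
      intro τ _
      have h1 : HasDerivAt (fun v : ℝ => Real.exp (s * v)) (Real.exp (s * τ) * s) τ := by
        simpa using ((hasDerivAt_id τ).const_mul s).exp
      have h2 := h1.div_const s
      refine h2.congr_deriv ?_
      field_simp
    have h2 := intervalIntegral.integral_eq_sub_of_hasDerivAt hd
      (((Real.continuous_exp.comp (continuous_const.mul continuous_id)).continuousOn
        (s := uIcc 0 t)).intervalIntegrable)
    rw [h2]
    simp [Real.exp_zero]
    ring
  -- integral of exp(-(s τ))
  have hexpnegint : ∀ t ∈ Icc (0:ℝ) T,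
      (∫ τ in (0:ℝ)..t, Real.exp (-(s * τ))) = (1 - Real.exp (-(s * t))) / s := by
    intro t ht
    have hd : ∀ τ ∈ uIcc (0:ℝ) t, HasDerivAt (fun v => -(Real.exp (-(s * v)) / s))
        (Real.exp (-(s * τ))) τ := by
      intro τ _
      have h1 : HasDerivAt (fun v : ℝ => Real.exp (-(s * v))) (Real.exp (-(s * τ)) * (-s)) τ := by
        simpa using (((hasDerivAt_id τ).const_mul s).neg).exp
      have h2 := (h1.div_const s).neg
      refine h2.congr_deriv ?_
      field_simp
    have h2 := intervalIntegral.integral_eq_sub_of_hasDerivAt hd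
      (((Real.continuous_exp.comp (continuous_const.mul continuous_id).neg).continuousOn
        (s := uIcc 0 t)).intervalIntegrable)
    rw [h2]
    simp [Real.exp_zero]
    ring
  -- sharp bound on e
  have heb : ∀ t ∈ Icc (0:ℝ) T, |e t| ≤ Real.exp (-(s * t)) * e0abs + M / s := by
    intro t ht
    have hE0 : 0 < Real.exp (s * t) := Real.exp_pos _
    have hcont : ContinuousOn (fun τ => -(Real.exp (s * τ) * h τ)) (Icc 0 T) :=
      (((Real.continuous_exp.comp (continuous_const.mul continuous_id)).continuousOn).mul hhc).neg
    have h1 : |w t| ≤ e0abs + M * ((Real.exp (s * t) - 1) / s) := by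
      have ha := abs_add_le (z0 - g x0) (∫ τ in (0:ℝ)..t, -(Real.exp (s * τ) * h τ))
      rw [← he0abs] at ha
      have hb := habsint _ hcont t ht
      have hc : (∫ τ in (0:ℝ)..t, |(-(Real.exp (s * τ) * h τ))|)
          ≤ ∫ τ in (0:ℝ)..t, Real.exp (s * τ) * M := by
        refine intervalIntegral.integral_mono_on ht.1
          ((hcont.abs.mono (hsub t ht)).intervalIntegrable)
          ((((Real.continuous_exp.comp (continuous_const.mul continuous_id)).continuousOn.mul
            continuousOn_const).mono (hsub t ht)).intervalIntegrable) ?_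
        intro τ hτ
        have hτT : τ ∈ Icc (0:ℝ) T := ⟨hτ.1, hτ.2.trans ht.2⟩
        have h4 : |(-(Real.exp (s * τ) * h τ))| = Real.exp (s * τ) * |h τ| := by
          rw [abs_neg, abs_mul, abs_of_pos (Real.exp_pos _)]
        rw [h4]
        exact mul_le_mul_of_nonneg_left (hMb τ hτT) (Real.exp_pos _).le
      have hd : (∫ τ in (0:ℝ)..t, Real.exp (s * τ) * M)
          = ((Real.exp (s * t) - 1) / s) * M := by
        rw [intervalIntegral.integral_mul_const, hexpint t ht]
      calc |w t| = |(z0 - g x0) + ∫ τ in (0:ℝ)..t, -(Real.exp (s * τ) * h τ)| := by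
            rw [hwint t ht]
        _ ≤ e0abs + |∫ τ in (0:ℝ)..t, -(Real.exp (s * τ) * h τ)| := ha
        _ ≤ e0abs + ∫ τ in (0:ℝ)..t, |(-(Real.exp (s * τ) * h τ))| := by linarith
        _ ≤ e0abs + M * ((Real.exp (s * t) - 1) / s) := by
            rw [mul_comm M]
            linarith [hc.trans_eq hd]
    have hwe : |w t| = Real.exp (s * t) * |e t| := by
      rw [hwdef]
      simp [abs_mul, abs_of_pos hE0]
    have hEinv : Real.exp (-(s * t)) * Real.exp (s * t) = 1 := by
      rw [← Real.exp_add]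
      simp
    have h2 : Real.exp (s * t) * (Real.exp (-(s * t)) * e0abs + M / s)
        = e0abs + Real.exp (s * t) * (M / s) := by
      linear_combination e0abs * hEinv
    have hMs : 0 ≤ M / s := div_nonneg hM0 hs.le
    have h3 : M * ((Real.exp (s * t) - 1) / s) = Real.exp (s * t) * (M / s) - M / s := by
      field_simp
    have h4 : Real.exp (s * t) * |e t|
        ≤ Real.exp (s * t) * (Real.exp (-(s * t)) * e0abs + M / s) := by
      rw [h2]
      rw [hwe] at h1
      linarith
    exact le_of_mul_le_mul_left h4 hE0
  -- integral bound on |e|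
  have hie : ∀ t ∈ Icc (0:ℝ) T, (∫ τ in (0:ℝ)..t, |e τ|) ≤ (e0abs + M * T) / s := by
    intro t ht
    have hcont2 : Continuous (fun τ : ℝ => Real.exp (-(s * τ)) * e0abs + M / s) :=
      ((Real.continuous_exp.comp (continuous_const.mul continuous_id).neg).mul
        continuous_const).add continuous_const
    have h1 : (∫ τ in (0:ℝ)..t, |e τ|)
        ≤ ∫ τ in (0:ℝ)..t, (Real.exp (-(s * τ)) * e0abs + M / s) := by
      refine intervalIntegral.integral_mono_on ht.1
        ((hec.abs.mono (hsub t ht)).intervalIntegrable)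
        (hcont2.intervalIntegrable 0 t) ?_
      intro τ hτ
      exact heb τ ⟨hτ.1, hτ.2.trans ht.2⟩
    have h2 : (∫ τ in (0:ℝ)..t, (Real.exp (-(s * τ)) * e0abs + M / s))
        = ((1 - Real.exp (-(s * t))) / s) * e0abs + (M / s) * t := by
      have hi1 : IntervalIntegrable (fun τ : ℝ => Real.exp (-(s * τ)) * e0abs)
          MeasureTheory.volume 0 t := (Continuous.intervalIntegrable (by fun_prop) 0 t)
      have hi2 : IntervalIntegrable (fun _ : ℝ => M / s) MeasureTheory.volume 0 t :=
        intervalIntegrable_const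
      rw [intervalIntegral.integral_add hi1 hi2,
        intervalIntegral.integral_mul_const, hexpnegint t ht,
        intervalIntegral.integral_const]
      simp [smul_eq_mul]
      ring
    have h3 : ((1 - Real.exp (-(s * t))) / s) * e0abs + (M / s) * t
        ≤ (e0abs + M * T) / s := by
      have he1 : 0 < Real.exp (-(s * t)) := Real.exp_pos _
      have h4 : ((1 - Real.exp (-(s * t))) / s) * e0abs ≤ e0abs / s := by
        rw [div_mul_eq_mul_div]
        gcongr ?_ / s
        nlinarith
      have h5 : (M / s) * t ≤ (M / s) * T :=
        mul_le_mul_of_nonneg_left ht.2 (div_nonneg hM0 hs.le)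
      have h6 : e0abs / s + (M / s) * T = (e0abs + M * T) / s := by
        field_simp
      linarith
    linarith
  -- comparison of x with xbar
  have hfxb : ContinuousOn (fun τ => f (xbar τ) (g (xbar τ))) (Icc 0 T) :=
    hfc.comp_continuousOn (hxbc.prodMk (hgc.comp_continuousOn hxbc))
  have hdiffc : ContinuousOn (fun τ => f (x τ) (z τ) - f (xbar τ) (g (xbar τ))) (Icc 0 T) :=
    hfxz.sub hfxb
  have hydiffb : ∀ τ ∈ Icc (0:ℝ) T,
      |f (x τ) (z τ) - f (xbar τ) (g (xbar τ))| ≤ (C1 + 1) * |x τ - xbar τ| + Kf * |e τ| := by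
    intro τ hτ
    have h1 := hfest (x τ) (z τ) (xbar τ) (g (xbar τ))
    have h2 : |z τ - g (xbar τ)| ≤ |e τ| + Kg * |x τ - xbar τ| := by
      have h4 : z τ - g (xbar τ) = e τ + (g (x τ) - g (xbar τ)) := by
        simp only [hedef]; ring
      calc |z τ - g (xbar τ)| = |e τ + (g (x τ) - g (xbar τ))| := by rw [h4]
        _ ≤ |e τ| + |g (x τ) - g (xbar τ)| := abs_add_le _ _
        _ ≤ |e τ| + Kg * |x τ - xbar τ| := by linarith [hgest (x τ) (xbar τ)]
    have h5 := mul_le_mul_of_nonneg_left h2 hKf0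
    rw [hC1]
    nlinarith [abs_nonneg (x τ - xbar τ), abs_nonneg (e τ),
      mul_nonneg (mul_nonneg hKf0 hKg0) (abs_nonneg (e τ)),
      mul_nonneg hKf0 (abs_nonneg (x τ - xbar τ))]
  have hyint : ∀ t ∈ Icc (0:ℝ) T,
      x t - xbar t = ∫ τ in (0:ℝ)..t, (f (x τ) (z τ) - f (xbar τ) (g (xbar τ))) := by
    intro t ht
    have hd : ∀ u ∈ uIcc (0:ℝ) t, HasDerivAt (fun v => x v - xbar v)
        (f (x u) (z u) - f (xbar u) (g (xbar u))) u := fun u hu =>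
      (hx u (hsub t ht hu)).sub (hxb u (hsub t ht hu))
    have h1 := intervalIntegral.integral_eq_sub_of_hasDerivAt hd
      ((hdiffc.mono (hsub t ht)).intervalIntegrable)
    rw [h1, hx0, hxb0]
    ring
  have hYc : ContinuousOn (fun u => |x u - xbar u|) (Icc 0 T) := (hxc.sub hxbc).abs
  have haY : (0:ℝ) ≤ Kf * (e0abs + M * T) / s := by positivity
  have hyb : ∀ t ∈ Icc (0:ℝ) T, |x t - xbar t| ≤ CY / s := by
    have hstepY : ∀ t ∈ Icc (0:ℝ) T, |x t - xbar t|
        ≤ Kf * (e0abs + M * T) / s + ∫ τ in (0:ℝ)..t, ((0:ℝ) + (C1 + 1) * |x τ - xbar τ|) := by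
      intro t ht
      have hi1 : IntervalIntegrable (fun τ => (C1 + 1) * |x τ - xbar τ| + Kf * |e τ|)
          MeasureTheory.volume 0 t :=
        (((continuousOn_const.mul hYc).add (continuousOn_const.mul hec.abs)).mono
          (hsub t ht)).intervalIntegrable
      have hi2 : IntervalIntegrable (fun τ => (C1 + 1) * |x τ - xbar τ|)
          MeasureTheory.volume 0 t :=
        ((continuousOn_const.mul hYc).mono (hsub t ht)).intervalIntegrable
      have hi3 : IntervalIntegrable (fun τ => (Kf:ℝ) * |e τ|) MeasureTheory.volume 0 t :=
        ((continuousOn_const.mul hec.abs).mono (hsub t ht)).intervalIntegrable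
      have h1 : |x t - xbar t|
          ≤ ∫ τ in (0:ℝ)..t, ((C1 + 1) * |x τ - xbar τ| + Kf * |e τ|) := by
        rw [hyint t ht]
        refine le_trans (habsint _ hdiffc t ht) ?_
        refine intervalIntegral.integral_mono_on ht.1
          ((hdiffc.abs.mono (hsub t ht)).intervalIntegrable) hi1 ?_
        intro τ hτ
        exact hydiffb τ ⟨hτ.1, hτ.2.trans ht.2⟩
      have h2 : (∫ τ in (0:ℝ)..t, ((C1 + 1) * |x τ - xbar τ| + Kf * |e τ|))
          = (∫ τ in (0:ℝ)..t, (C1 + 1) * |x τ - xbar τ|)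
            + ∫ τ in (0:ℝ)..t, (Kf:ℝ) * |e τ| :=
        intervalIntegral.integral_add hi2 hi3
      have h3 : (∫ τ in (0:ℝ)..t, (Kf:ℝ) * |e τ|) = Kf * ∫ τ in (0:ℝ)..t, |e τ| :=
        intervalIntegral.integral_const_mul _ _
      have h4 : (Kf:ℝ) * (∫ τ in (0:ℝ)..t, |e τ|) ≤ Kf * ((e0abs + M * T) / s) :=
        mul_le_mul_of_nonneg_left (hie t ht) hKf0
      have h5 : (∫ τ in (0:ℝ)..t, (C1 + 1) * |x τ - xbar τ|)
          = ∫ τ in (0:ℝ)..t, ((0:ℝ) + (C1 + 1) * |x τ - xbar τ|) := by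
        congr 1
        ext τ
        ring
      rw [h2, h3] at h1
      rw [← h5]
      have h6 : (Kf:ℝ) * ((e0abs + M * T) / s) = Kf * (e0abs + M * T) / s := by ring
      linarith
    intro t ht
    have h7 := int_gronwall (T := T) (φ := fun u => |x u - xbar u|)
      (by linarith : (0:ℝ) < C1 + 1) haY le_rfl hYc
      (fun u _ => abs_nonneg _) hstepY t ht
    have h8 : (Kf * (e0abs + M * T) / s + 0 / (C1 + 1)) * Real.exp ((C1 + 1) * T)
        = CY / s := by
      rw [hCY, zero_div, add_zero, div_mul_eq_mul_div]
    rw [h8] at h7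
    exact h7
  intro t ht
  exact ⟨hyb t ht, heb t ht⟩

set_option maxHeartbeats 1600000 in
/-- Tikhonov-style singular perturbation limit for a scalar fast linear variable:
as s → ∞, the solution of ∂t x = f(x,z), ∂t z = s·(g(x) - z) converges uniformly
on [δ,T] to the solution of the reduced system with z replaced by g(x). -/
theorem tikhonov_fast_linear
    (f : ℝ → ℝ → ℝ) (g : ℝ → ℝ) (Kf Kg : NNReal)
    (hf_smooth : ContDiff ℝ (⊤ : ℕ∞) (fun p : ℝ × ℝ => f p.1 p.2))
    (hg_smooth : ContDiff ℝ (⊤ : ℕ∞) g)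
    (hf_lip : LipschitzWith Kf (fun p : ℝ × ℝ => f p.1 p.2))
    (hg_lip : LipschitzWith Kg g)
    (T x0 z0 : ℝ) (hT : 0 < T)
    (X Z : ℝ → ℝ → ℝ) (xbar : ℝ → ℝ)
    (hX : ∀ s > (0:ℝ), ∀ t ∈ Set.Icc (0:ℝ) T,
      HasDerivAt (X s) (f (X s t) (Z s t)) t)
    (hZ : ∀ s > (0:ℝ), ∀ t ∈ Set.Icc (0:ℝ) T,
      HasDerivAt (Z s) (s * (g (X s t) - Z s t)) t)
    (hX0 : ∀ s > (0:ℝ), X s 0 = x0)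
    (hZ0 : ∀ s > (0:ℝ), Z s 0 = z0)
    (hxbar : ∀ t ∈ Set.Icc (0:ℝ) T,
      HasDerivAt xbar (f (xbar t) (g (xbar t))) t)
    (hxbar0 : xbar 0 = x0) :
    ∀ δ > (0:ℝ), ∀ ε > (0:ℝ), ∃ S : ℝ, ∀ s ≥ S,
      ∀ t ∈ Set.Icc δ T, |X s t - xbar t| ≤ ε ∧ |Z s t - g (xbar t)| ≤ ε := by
  intro δ hδ ε hε
  have hKf0 : (0:ℝ) ≤ Kf := Kf.coe_nonneg
  have hKg0 : (0:ℝ) ≤ Kg := Kg.coe_nonneg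
  set A : ℝ := |f x0 (g x0)| with hA
  set C1 : ℝ := Kf * (1 + Kg) with hC1
  set C2 : ℝ := C1 + Kf with hC2
  set e0abs : ℝ := |z0 - g x0| with he0abs
  set bb : ℝ := (1 + Kg) * A with hbb
  set cc : ℝ := (1 + Kg) * C2 + 1 with hcc
  set R : ℝ := (e0abs + bb / cc) * Real.exp (cc * T) with hR
  set M : ℝ := Kg * (A + C2 * R) with hM
  set CY : ℝ := Kf * (e0abs + M * T) * Real.exp ((C1 + 1) * T) with hCY
  have hA0 : 0 ≤ A := hA ▸ abs_nonneg _
  have hC10 : 0 ≤ C1 := by rw [hC1]; positivity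
  have hC20 : 0 ≤ C2 := by rw [hC2]; linarith
  have he0abs0 : 0 ≤ e0abs := he0abs ▸ abs_nonneg _
  have hbb0 : 0 ≤ bb := by rw [hbb]; positivity
  have hcc0 : 0 < cc := by rw [hcc]; nlinarith
  have hR0 : 0 ≤ R := by rw [hR]; positivity
  have hM0 : 0 ≤ M := by rw [hM]; positivity
  have hCY0 : 0 ≤ CY := by rw [hCY]; positivity
  have key : ∀ s > (0:ℝ), ∀ t ∈ Set.Icc (0:ℝ) T,
      |X s t - xbar t| ≤ CY / s ∧
      |Z s t - g (X s t)| ≤ Real.exp (-(s * t)) * e0abs + M / s := fun s hs =>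
    tikhonov_key f g Kf Kg hg_smooth hf_lip hg_lip T x0 z0 s hT hs
      (X s) (Z s) xbar (hX s hs) (hZ s hs) (hX0 s hs) (hZ0 s hs) hxbar hxbar0
      A C1 C2 bb cc R M CY e0abs hA hC1 hC2 he0abs hbb hcc hR hM hCY
  have hgest : ∀ a₁ a₂ : ℝ, |g a₁ - g a₂| ≤ Kg * |a₁ - a₂| := by
    intro a₁ a₂
    have := hg_lip.dist_le_mul a₁ a₂
    simpa [Real.dist_eq] using this
  set D : ℝ := M + Kg * CY + CY with hD
  have hmain : ∀ s > (0:ℝ), ∀ t ∈ Set.Icc δ T,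
      |X s t - xbar t| ≤ Real.exp (-(s * δ)) * e0abs + D / s ∧
      |Z s t - g (xbar t)| ≤ Real.exp (-(s * δ)) * e0abs + D / s := by
    intro s hs t ht
    have htT : t ∈ Set.Icc (0:ℝ) T := ⟨hδ.le.trans ht.1, ht.2⟩
    obtain ⟨h1, h2⟩ := key s hs t htT
    have hexpd : Real.exp (-(s * t)) ≤ Real.exp (-(s * δ)) :=
      Real.exp_le_exp.2 (by nlinarith [ht.1])
    have hexpd0 : 0 < Real.exp (-(s * δ)) := Real.exp_pos _
    have hDsplit : D / s = M / s + (Kg * CY) / s + CY / s := by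
      rw [hD]; ring
    have hCYs0 : 0 ≤ CY / s := div_nonneg hCY0 hs.le
    have hKgCYs0 : 0 ≤ (Kg * CY) / s := div_nonneg (mul_nonneg hKg0 hCY0) hs.le
    have hMs0 : 0 ≤ M / s := div_nonneg hM0 hs.le
    constructor
    · have : CY / s ≤ D / s := by rw [hDsplit]; linarith
      nlinarith [mul_nonneg hexpd0.le he0abs0]
    · have h3 : |Z s t - g (xbar t)| ≤ |Z s t - g (X s t)| + Kg * |X s t - xbar t| := by
        have h4 : Z s t - g (xbar t) = (Z s t - g (X s t)) + (g (X s t) - g (xbar t)) := by ring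
        calc |Z s t - g (xbar t)|
            = |(Z s t - g (X s t)) + (g (X s t) - g (xbar t))| := by rw [← h4]
          _ ≤ |Z s t - g (X s t)| + |g (X s t) - g (xbar t)| := abs_add_le _ _
          _ ≤ |Z s t - g (X s t)| + Kg * |X s t - xbar t| := by
              linarith [hgest (X s t) (xbar t)]
      have h5 : (Kg:ℝ) * |X s t - xbar t| ≤ (Kg * CY) / s := by
        have := mul_le_mul_of_nonneg_left h1 hKg0
        calc (Kg:ℝ) * |X s t - xbar t| ≤ Kg * (CY / s) := this
          _ = (Kg * CY) / s := by ring
      have h6 : e0abs * Real.exp (-(s * t)) ≤ e0abs * Real.exp (-(s * δ)) :=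
        mul_le_mul_of_nonneg_left hexpd he0abs0
      rw [hDsplit]
      nlinarith
  have htend : Tendsto (fun s => Real.exp (-(s * δ)) * e0abs + D / s) atTop (nhds 0) := by
    have h1 : Tendsto (fun s : ℝ => -(s * δ)) atTop atBot :=
      tendsto_neg_atTop_atBot.comp (tendsto_id.atTop_mul_const hδ)
    have h2 : Tendsto (fun s : ℝ => Real.exp (-(s * δ)) * e0abs) atTop (nhds 0) := by
      have := (Real.tendsto_exp_atBot.comp h1).mul_const e0abs
      simpa using this
    have h3 : Tendsto (fun s : ℝ => D / s) atTop (nhds 0) :=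
      tendsto_const_nhds.div_atTop tendsto_id
    simpa using h2.add h3
  have hev : ∀ᶠ s in atTop, Real.exp (-(s * δ)) * e0abs + D / s < ε :=
    htend.eventually_lt_const hε
  obtain ⟨S, hS⟩ := Filter.eventually_atTop.1 (hev.and (eventually_ge_atTop (1:ℝ)))
  refine ⟨S, fun s hsS t ht => ?_⟩
  obtain ⟨hlt, hs1⟩ := hS s hsS
  have hs0 : (0:ℝ) < s := lt_of_lt_of_le one_pos hs1
  obtain ⟨hb1, hb2⟩ := hmain s hs0 t ht
  exact ⟨hb1.trans hlt.le, hb2.trans hlt.le⟩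
end
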